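/- arXiv:1208.0357 — 2 statements merged into one kernel-verified Lean document; each statement's English description precedes it below -/
import Mathlib

section
/- Let ℓ, m ≥ 2 be integers, α = ℓm+1, β = m. A finite sequence [n_1, …, n_k] of integers with |n_i| ≥ 2 for all i satisfies cf[n_1, …, n_k] = (β−α)/α if and only if it equals the length-ℓ sequence C with C_i = (−1)^i·2 for 1 ≤ i ≤ ℓ−1 and C_ℓ = (−1)^ℓ·(m+1). -/
/-- The continued fraction value `cf [n_1, …, n_k] = 1/(n_1 + 1/(n_2 + ⋯ + 1/n_k))`. -/
def cf : List ℤ → ℚ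
  | [] => 0
  | n :: L => 1 / ((n : ℚ) + cf L)

/-!
Write `a k = k m + 1`. Entries of absolute value at least `2` keep every value `cf L` in
`(-1, 1)`, so `cf (n :: L) = q` pins `n` down as an integer at distance less than `1` from
`q⁻¹ = n + cf L`. For `q = a k / a (k+1)` and `k ≥ 1`, `q⁻¹ = 1 + m / a k ∈ [1, 2)` forces `n = 2`
and `cf L = -(a (k-1) / a k)`; for `k = 0`, `q⁻¹ = m + 1` is an integer, so `cf L = 0` and
`L = []`. By induction, `[2, -2, 2, …, ±(m+1)]` of length `k + 1` is the only such sequence with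
value `a k / a (k+1)`; the target value is `-(a (ℓ-1) / a ℓ)`, so it remains to negate.
-/

theorem cf_cons (n : ℤ) (L : List ℤ) : cf (n :: L) = ((n : ℚ) + cf L)⁻¹ := by
  rw [cf, one_div]

theorem cf_map_neg (L : List ℤ) : cf (L.map Neg.neg) = -cf L := by
  induction L with
  | nil => simp [cf]
  | cons n L ih =>
    rw [List.map_cons, cf_cons, cf_cons, ih, Int.cast_neg, ← neg_add, inv_neg]

theorem abs_cf_lt_one {L : List ℤ} (hL : ∀ n ∈ L, 2 ≤ |n|) : |cf L| < 1 := by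
  induction L with
  | nil => simp [cf]
  | cons n L ih =>
    have hn : (2 : ℚ) ≤ |(n : ℚ)| := by exact_mod_cast hL n List.mem_cons_self
    have htail : |cf L| < 1 := ih fun x hx => hL x (List.mem_cons_of_mem _ hx)
    have hsum : 1 < |(n : ℚ) + cf L| := by
      have := abs_sub_abs_le_abs_sub (n : ℚ) (-cf L)
      rw [sub_neg_eq_add, abs_neg] at this
      linarith
    rw [cf_cons, abs_inv]
    exact inv_lt_one_of_one_lt₀ hsum

theorem cf_ne_zero {L : List ℤ} (hL : ∀ n ∈ L, 2 ≤ |n|) (hne : L ≠ []) : cf L ≠ 0 := by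
  obtain ⟨n, L, rfl⟩ := List.exists_cons_of_ne_nil hne
  have hn : (2 : ℚ) ≤ |(n : ℚ)| := by exact_mod_cast hL n List.mem_cons_self
  have htail : |cf L| < 1 := abs_cf_lt_one fun x hx => hL x (List.mem_cons_of_mem _ hx)
  rw [cf_cons]
  refine inv_ne_zero fun hsum => ?_
  rw [add_eq_zero_iff_eq_neg.mp hsum, abs_neg] at hn
  linarith

theorem two_le_abs_of_mem_map_neg {L : List ℤ} (hL : ∀ n ∈ L, 2 ≤ |n|) :
    ∀ n ∈ L.map Neg.neg, 2 ≤ |n| := by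
  intro n hn
  obtain ⟨x, hx, rfl⟩ := List.mem_map.mp hn
  rw [abs_neg]
  exact hL x hx

def altTwoSeq (m : ℕ) : ℕ → List ℤ
  | 0 => [(m : ℤ) + 1]
  | k + 1 => 2 :: (altTwoSeq m k).map Neg.neg

theorem cf_altTwoSeq (m k : ℕ) :
    cf (altTwoSeq m k) = (k * m + 1 : ℚ) / ((k + 1) * m + 1) := by
  induction k with
  | zero => simp [altTwoSeq, cf_cons, cf]
  | succ k ih =>
    have ha : ((k : ℚ) + 1) * m + 1 ≠ 0 := by positivity
    have hsum : (2 : ℚ) + -((k * m + 1) / ((k + 1) * m + 1))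
        = ((k + 1 + 1) * m + 1) / ((k + 1) * m + 1) := by
      field_simp; ring
    rw [altTwoSeq, cf_cons, cf_map_neg, ih, Int.cast_ofNat, hsum, inv_div]
    push_cast; ring

theorem eq_singleton_of_cf_eq_inv {L : List ℤ} (hL : ∀ n ∈ L, 2 ≤ |n|) {z : ℤ} (hz : z ≠ 0)
    (h : cf L = (z : ℚ)⁻¹) : L = [z] := by
  rcases L with _ | ⟨n, L⟩
  · exact absurd h.symm (by simpa [cf] using hz)
  have hL' : ∀ x ∈ L, 2 ≤ |x| := fun x hx => hL x (List.mem_cons_of_mem _ hx)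
  have htail : cf L = ((z - n : ℤ) : ℚ) := by
    rw [cf_cons, inv_inj] at h
    push_cast
    linarith
  have hn : z - n = 0 := by
    have habs := abs_cf_lt_one hL'
    rw [htail] at habs
    exact Int.abs_lt_one_iff.mp (by exact_mod_cast habs)
  have hnil : L = [] := by
    by_contra hne
    exact cf_ne_zero hL' hne (by rw [htail, hn, Int.cast_zero])
  rw [hnil, show n = z by omega]

theorem eq_two_of_add_cf_mem_Ico {n : ℤ} {L : List ℤ} (hL : ∀ x ∈ n :: L, 2 ≤ |x|)
    (h : (n : ℚ) + cf L ∈ Set.Ico 1 2) : n = 2 := by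
  have htail := abs_lt.mp (abs_cf_lt_one fun x hx => hL x (List.mem_cons_of_mem _ hx))
  have hpos : (0 : ℚ) < n := by linarith [h.1]
  have hlt : (n : ℚ) < 3 := by linarith [h.2]
  have hpos' : 0 < n := by exact_mod_cast hpos
  have hlt' : n < 3 := by exact_mod_cast hlt
  have habs := le_abs.mp (hL n List.mem_cons_self)
  omega

theorem eq_altTwoSeq_of_cf_eq {m k : ℕ} {L : List ℤ} (hL : ∀ n ∈ L, 2 ≤ |n|)
    (h : cf L = (k * m + 1 : ℚ) / ((k + 1) * m + 1)) : L = altTwoSeq m k := by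
  induction k generalizing L with
  | zero =>
    exact eq_singleton_of_cf_eq_inv hL (by omega) (by rw [h]; push_cast; ring)
  | succ k ih =>
    rcases L with _ | ⟨n, L⟩
    · exact absurd h.symm (by positivity)
    have ha : (0 : ℚ) < (k + 1) * m + 1 := by positivity
    have hsum : (n : ℚ) + cf L = 1 + m / ((k + 1) * m + 1) := by
      rw [cf_cons, inv_eq_iff_eq_inv, inv_div] at h
      rw [h]
      push_cast
      field_simp
      ring
    have hfrac : 0 ≤ (m : ℚ) / ((k + 1) * m + 1) ∧ (m : ℚ) / ((k + 1) * m + 1) < 1 :=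
      ⟨by positivity, by rw [div_lt_one ha]; nlinarith⟩
    have hn : n = 2 := eq_two_of_add_cf_mem_Ico hL ⟨by linarith, by linarith⟩
    have hneg : cf (L.map Neg.neg) = (k * m + 1 : ℚ) / ((k + 1) * m + 1) := by
      rw [hn, Int.cast_ofNat] at hsum
      rw [cf_map_neg, show cf L = m / ((k + 1) * m + 1) - 1 by linarith]
      field_simp
      ring
    have hL' := two_le_abs_of_mem_map_neg fun x hx => hL x (List.mem_cons_of_mem _ hx)
    rw [altTwoSeq, hn, ← neg_involutive.list_map.eq_iff.mp (ih hL' hneg)]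

theorem cf_eq_iff_eq_altTwoSeq {m k : ℕ} {L : List ℤ} (hL : ∀ n ∈ L, 2 ≤ |n|) :
    cf L = (k * m + 1 : ℚ) / ((k + 1) * m + 1) ↔ L = altTwoSeq m k :=
  ⟨eq_altTwoSeq_of_cf_eq hL, fun h => h ▸ cf_altTwoSeq m k⟩

theorem altTwoSeq_eq_ofFn (m k : ℕ) :
    altTwoSeq m k = List.ofFn fun j : Fin (k + 1) =>
      (-1) ^ (j : ℕ) * if (j : ℕ) = k then (m : ℤ) + 1 else 2 := by
  induction k with
  | zero => simp [altTwoSeq]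
  | succ k ih =>
    rw [altTwoSeq, ih, List.map_ofFn, List.ofFn_succ (n := k + 1)]
    congr 2 with j
    simp only [Function.comp_apply, Fin.val_succ, add_left_inj, pow_succ]
    split_ifs <;> ring

theorem map_neg_altTwoSeq_eq_ofFn (m k : ℕ) :
    (altTwoSeq m k).map Neg.neg = List.ofFn fun j : Fin (k + 1) =>
      if (j : ℕ) = k then (-1) ^ (k + 1) * ((m : ℤ) + 1) else (-1) ^ ((j : ℕ) + 1) * 2 := by
  rw [altTwoSeq_eq_ofFn, List.map_ofFn]
  congr 1 with j
  simp only [Function.comp_apply, pow_succ]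
  split_ifs with hj
  · rw [hj]; ring
  · ring

theorem cf_eq_iff_C_general (ℓ m : ℕ) (hℓ : 2 ≤ ℓ)
    (L : List ℤ) (hL : ∀ n ∈ L, 2 ≤ |n|) :
    cf L = ((m : ℚ) - ((ℓ : ℚ) * m + 1)) / ((ℓ : ℚ) * m + 1) ↔
      L = List.ofFn (fun j : Fin ℓ =>
            if (j : ℕ) = ℓ - 1 then (-1) ^ ℓ * ((m : ℤ) + 1)
            else (-1) ^ ((j : ℕ) + 1) * 2) := by
  obtain ⟨k, rfl⟩ : ∃ k, ℓ = k + 1 := ⟨ℓ - 1, by omega⟩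
  have hvalue : ((m : ℚ) - (((k + 1 : ℕ) : ℚ) * m + 1)) / (((k + 1 : ℕ) : ℚ) * m + 1)
      = -((k * m + 1 : ℚ) / ((k + 1) * m + 1)) := by
    push_cast; ring
  rw [hvalue, add_tsub_cancel_right, ← map_neg_altTwoSeq_eq_ofFn, ← neg_eq_iff_eq_neg,
    ← cf_map_neg, ← neg_involutive.list_map.eq_iff]
  exact cf_eq_iff_eq_altTwoSeq (two_le_abs_of_mem_map_neg hL)

/-- For `ℓ, m ≥ 2`, `α = ℓm+1`, `β = m`: a sequence of integers all of absolute value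
at least `2` has continued fraction value `(β−α)/α` iff it is the length-`ℓ`
sequence `C` with `C_i = (−1)^i·2` for `1 ≤ i ≤ ℓ−1` and `C_ℓ = (−1)^ℓ·(m+1)`. -/
theorem cf_eq_iff_C (ℓ m : ℕ) (hℓ : 2 ≤ ℓ) (hm : 2 ≤ m)
    (L : List ℤ) (hL : ∀ n ∈ L, 2 ≤ |n|) :
    cf L = ((m : ℚ) - ((ℓ : ℚ) * m + 1)) / ((ℓ : ℚ) * m + 1) ↔
      L = List.ofFn (fun j : Fin ℓ =>
            if (j : ℕ) = ℓ - 1 then (-1) ^ ℓ * ((m : ℤ) + 1)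
            else (-1) ^ ((j : ℕ) + 1) * 2) :=
  cf_eq_iff_C_general ℓ m hℓ L hL
end

section
/- Let ℓ ≥ 3 and m ≥ 2 be integers, α = ℓm−1, β = m. A finite sequence [n_1, …, n_k] of integers with |n_i| ≥ 2 for all i satisfies cf[n_1, …, n_k] = β/α if and only if it equals A = [ℓ, −m] or it equals the length-m sequence B with B_1 = ℓ−1 and B_i = (−1)^i·2 for 2 ≤ i ≤ m. -/
/-!
An admissible tail `T` (all entries of absolute value at least `2`) has `|cf T| < 1`, so
`cf (a :: T) = q` forces `a` to be one of the two integers nearest to `q⁻¹`, and then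
`cf T = q⁻¹ - a`. For `q = m / (ℓm - 1)` we have `q⁻¹ = ℓ - 1/m`, so `a ∈ {ℓ - 1, ℓ}`.
If `a = ℓ` then `cf T = -1/m`, which forces `T = [-m]`; if `a = ℓ - 1` then
`cf T = (m - 1)/m`, and the same argument, by induction, shows that the only admissible
expansion of `k/(k+1)` is the alternating sequence `[2, -2, 2, …]` of length `k`.
-/

theorem Int.eq_of_abs_sub_lt_one {K : Type*} [Ring K] [LinearOrder K] [IsStrictOrderedRing K]
    {a b : ℤ} (h : |(a : K) - b| < 1) : a = b := by
  rw [← Int.cast_sub, ← Int.cast_abs, ← Int.cast_one, Int.cast_lt, Int.abs_lt_one_iff] at h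
  omega

theorem Int.eq_or_eq_add_one_of_abs_sub_lt_one {K : Type*} [Field K] [LinearOrder K]
    [IsStrictOrderedRing K] {x : K} {n a : ℤ} (hn : (n : K) < x) (hx : x ≤ n + 1)
    (ha : |x - a| < 1) : a = n ∨ a = n + 1 := by
  obtain ⟨h₁, h₂⟩ := abs_sub_lt_iff.1 ha
  have hlo : n - 1 < a := by exact_mod_cast (by push_cast; linarith : ((n - 1 : ℤ) : K) < a)
  have hhi : a < n + 2 := by exact_mod_cast (by push_cast; linarith : (a : K) < ((n + 2 : ℤ) : K))
  omega

theorem cf_cons_eq_iff {a : ℤ} {T : List ℤ} {q : ℚ} : cf (a :: T) = q ↔ cf T = q⁻¹ - a := by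
  rw [cf, one_div, inv_eq_iff_eq_inv, eq_sub_iff_add_eq']

theorem cf_eq_zero_iff {L : List ℤ} (hL : ∀ n ∈ L, 2 ≤ |n|) : cf L = 0 ↔ L = [] := by
  refine ⟨fun h => ?_, fun h => h ▸ rfl⟩
  cases L with
  | nil => rfl
  | cons a T =>
    obtain ⟨ha, hT⟩ := List.forall_mem_cons.1 hL
    replace ha : (2 : ℚ) ≤ |(a : ℚ)| := by exact_mod_cast ha
    replace hT := abs_cf_lt_one hT
    rw [cf_cons_eq_iff, inv_zero, zero_sub] at h
    rw [h, abs_neg] at hT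
    linarith

theorem cf_cons_eq_iff_head_eq_or_eq {a n : ℤ} {T : List ℤ} (hT : ∀ x ∈ T, 2 ≤ |x|) {q : ℚ}
    (hlo : n < q⁻¹) (hhi : q⁻¹ ≤ n + 1) :
    cf (a :: T) = q ↔ a = n ∧ cf T = q⁻¹ - n ∨ a = n + 1 ∧ cf T = q⁻¹ - (n + 1) := by
  rw [cf_cons_eq_iff]
  constructor
  · intro h
    have hT1 := abs_cf_lt_one hT
    rw [h] at hT1
    obtain rfl | rfl := Int.eq_or_eq_add_one_of_abs_sub_lt_one hlo hhi hT1
    · exact Or.inl ⟨rfl, h⟩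
    · exact Or.inr ⟨rfl, by exact_mod_cast h⟩
  · rintro (⟨rfl, h⟩ | ⟨rfl, h⟩) <;> exact_mod_cast h

theorem cf_eq_inv_iff {T : List ℤ} (hT : ∀ n ∈ T, 2 ≤ |n|) {c : ℤ} (hc : 2 ≤ |c|) :
    cf T = (c : ℚ)⁻¹ ↔ T = [c] := by
  cases T with
  | nil =>
    have hc0 : (c : ℚ) ≠ 0 := by
      exact_mod_cast (show c ≠ 0 by rintro rfl; simp at hc)
    simp [cf, hc0.symm]
  | cons a S =>
    have hS := (List.forall_mem_cons.1 hT).2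
    rw [cf_cons_eq_iff, inv_inv, List.cons.injEq]
    constructor
    · intro h
      have hS1 := abs_cf_lt_one hS
      rw [h] at hS1
      obtain rfl := (Int.eq_of_abs_sub_lt_one hS1).symm
      exact ⟨rfl, (cf_eq_zero_iff hS).1 (by rw [h, sub_self])⟩
    · rintro ⟨rfl, rfl⟩
      simp [cf]

def altTwos (k : ℕ) : List ℤ := List.ofFn fun i : Fin k => (-1) ^ (i : ℕ) * 2

theorem altTwos_succ (k : ℕ) : altTwos (k + 1) = 2 :: (altTwos k).map Neg.neg := by
  simp [altTwos, List.ofFn_succ, List.map_ofFn, Function.comp_def, pow_succ]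

theorem cf_eq_iff_eq_altTwos (k : ℕ) {T : List ℤ} (hT : ∀ n ∈ T, 2 ≤ |n|) :
    cf T = k / (k + 1) ↔ T = altTwos k := by
  induction k generalizing T with
  | zero => simpa [altTwos] using cf_eq_zero_iff hT
  | succ k ih =>
    cases T with
    | nil => simp [cf, altTwos]; positivity
    | cons a S =>
      obtain ⟨ha, hS⟩ := List.forall_mem_cons.1 hT
      have hnegS : ∀ n ∈ S.map Neg.neg, 2 ≤ |n| := fun n hn => by
        simpa using hS _ ((List.mem_map_of_involutive neg_involutive).1 hn)
      have hinv : (((k : ℚ) + 1) / (k + 1 + 1))⁻¹ = 1 + 1 / (k + 1) := by field_simp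
      have hk : 0 < 1 / ((k : ℚ) + 1) := by positivity
      have hk' : 1 / ((k : ℚ) + 1) ≤ 1 := by rw [div_le_one (by positivity)]; simp
      have hS_cf : (1 : ℚ) + 1 / (k + 1) - ((1 : ℤ) + 1) = -(k / (k + 1)) := by field_simp; ring
      have ha1 : a ≠ 1 := by rintro rfl; simp at ha
      push_cast
      rw [cf_cons_eq_iff_head_eq_or_eq hS (n := 1) (by rw [hinv]; push_cast; linarith)
        (by rw [hinv]; push_cast; linarith), hinv, hS_cf, ← neg_eq_iff_eq_neg, ← cf_map_neg,
        ih hnegS, altTwos_succ, List.cons.injEq, ← neg_involutive.list_map.eq_iff]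
      simp only [ha1, false_and, false_or, Int.reduceAdd]

theorem ofFn_ite_zero_eq_cons_altTwos (c : ℤ) (k : ℕ) :
    List.ofFn (fun j : Fin (k + 1) => if (j : ℕ) = 0 then c else (-1) ^ ((j : ℕ) + 1) * 2) =
      c :: altTwos k := by
  simp [altTwos, List.ofFn_succ, pow_succ]

theorem cf_eq_iff_A_or_B'_general (ℓ m : ℕ) (hm : 2 ≤ m)
    (L : List ℤ) (hL : ∀ n ∈ L, 2 ≤ |n|) :
    cf L = (m : ℚ) / ((ℓ : ℚ) * m - 1) ↔
      L = [(ℓ : ℤ), -(m : ℤ)] ∨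
      L = List.ofFn (fun j : Fin m =>
            if (j : ℕ) = 0 then (ℓ : ℤ) - 1 else (-1) ^ ((j : ℕ) + 1) * 2) := by
  obtain ⟨k, rfl⟩ : ∃ k, m = k + 1 := ⟨m - 1, by omega⟩
  rw [ofFn_ite_zero_eq_cons_altTwos]
  cases L with
  | nil =>
    have hden : (ℓ : ℚ) * (k + 1) ≠ 1 := by
      exact_mod_cast show ℓ * (k + 1) ≠ 1 from fun h => by
        have := Nat.eq_one_of_mul_eq_one_left h; omega
    push_cast
    simp [cf, eq_div_iff (sub_ne_zero.2 hden)]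
    positivity
  | cons a T =>
    have hT := (List.forall_mem_cons.1 hL).2
    have hinv : (((k : ℚ) + 1) / (ℓ * (k + 1) - 1))⁻¹ = ℓ - 1 / (k + 1) := by
      rw [inv_div]; field_simp
    have hk : 1 / ((k : ℚ) + 1) < 1 := by rw [div_lt_one (by positivity)]; exact_mod_cast hm
    have hk' : 0 < 1 / ((k : ℚ) + 1) := by positivity
    have hA : (ℓ : ℚ) - 1 / (k + 1) - ((ℓ - 1 : ℤ) + 1) = ((-((k : ℤ) + 1) : ℤ) : ℚ)⁻¹ := by
      push_cast; rw [inv_neg]; ring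
    have hB : (ℓ : ℚ) - 1 / (k + 1) - (ℓ - 1 : ℤ) = k / (k + 1) := by
      push_cast; field_simp; ring
    push_cast
    rw [cf_cons_eq_iff_head_eq_or_eq hT (n := ℓ - 1) (by rw [hinv]; push_cast; linarith)
      (by rw [hinv]; push_cast; linarith), hinv, hA, hB, cf_eq_iff_eq_altTwos k hT,
      cf_eq_inv_iff hT (by rw [abs_neg, abs_of_nonneg (by positivity)]; omega),
      List.cons.injEq, List.cons.injEq, sub_add_cancel, or_comm]

/-- For `ℓ ≥ 3`, `m ≥ 2`, `α = ℓm−1`, `β = m`: a sequence of integers all of absolute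
value at least `2` has continued fraction value `β/α` iff it is `A = [ℓ, −m]` or the
length-`m` sequence `B` with `B_1 = ℓ−1` and `B_i = (−1)^i·2` for `2 ≤ i ≤ m`. -/
theorem cf_eq_iff_A_or_B' (ℓ m : ℕ) (hℓ : 3 ≤ ℓ) (hm : 2 ≤ m)
    (L : List ℤ) (hL : ∀ n ∈ L, 2 ≤ |n|) :
    cf L = (m : ℚ) / ((ℓ : ℚ) * m - 1) ↔
      L = [(ℓ : ℤ), -(m : ℤ)] ∨
      L = List.ofFn (fun j : Fin m =>
            if (j : ℕ) = 0 then (ℓ : ℤ) - 1 else (-1) ^ ((j : ℕ) + 1) * 2) :=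
  cf_eq_iff_A_or_B'_general ℓ m hm L hL
end
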